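/- Let m ≥ 2 be an integer and let v : ℝ^m ∖ {0} → ℝ^{m³} be the cubic Misawa–Nakauchi map with components v_{ijk}(x) = (1/√((m−1)(m+2)))( δ_{ij} x_k/r + δ_{jk} x_i/r + δ_{ik} x_j/r − (m+2) x_i x_j x_k / r³ ). Then v is a harmonic map into the sphere, i.e. for every x ∈ ℝ^m ∖ {0} it satisfies Δv(x) + |∇v(x)|² v(x) = 0 (componentwise), where |∇v|² = Σ_{a,i,j,k}(∂_a v_{ijk})². -/

import Mathlib

noncomputable section

open Real MeasureTheory

/-- Partial derivative of `f` in the `a`-th coordinate direction. -/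
def pd {m : ℕ} (a : Fin m) (f : EuclideanSpace ℝ (Fin m) → ℝ)
    (x : EuclideanSpace ℝ (Fin m)) : ℝ :=
  fderiv ℝ f x (EuclideanSpace.single a 1)

/-- Euclidean Laplacian `Δf = Σ_a ∂²f/∂x_a²`. -/
def lap {m : ℕ} (f : EuclideanSpace ℝ (Fin m) → ℝ)
    (x : EuclideanSpace ℝ (Fin m)) : ℝ :=
  ∑ a : Fin m, pd a (pd a f) x

/-- Squared norm of the total derivative: `|∇w|² = Σ_{k,a} (∂_k w_a)²`. -/
def gradSq {m : ℕ} {ι : Type*} [Fintype ι]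
    (w : ι → EuclideanSpace ℝ (Fin m) → ℝ) (x : EuclideanSpace ℝ (Fin m)) : ℝ :=
  ∑ k : Fin m, ∑ a : ι, (pd k (w a) x) ^ 2

/-- The cubic Misawa–Nakauchi map
`v_{ijk}(x) = (1/√((m−1)(m+2)))(δ_{ij}x_k/r + δ_{jk}x_i/r + δ_{ik}x_j/r − (m+2)xᵢxⱼx_k/r³)`. -/
def vMN (m : ℕ) (i j k : Fin m) (x : EuclideanSpace ℝ (Fin m)) : ℝ :=
  (1 / Real.sqrt (((m : ℝ) - 1) * ((m : ℝ) + 2))) *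
    ((if i = j then (1 : ℝ) else 0) * x k / ‖x‖
      + (if j = k then (1 : ℝ) else 0) * x i / ‖x‖
      + (if i = k then (1 : ℝ) else 0) * x j / ‖x‖
      - ((m : ℝ) + 2) * x i * x j * x k / ‖x‖ ^ 3)

/-!
Write `v = c (L / r - (m + 2) T / r³)` with `L = δᵢⱼxₖ + δⱼₖxᵢ + δᵢₖxⱼ` linear and
`T = xᵢxⱼxₖ` cubic. For `f` homogeneous of degree `ℓ`, Euler's identity `x · ∇f = ℓ f` turns the
product rule into `Δ(f rˢ) = (Δf) rˢ + s (2ℓ + s + m - 2) f rˢ⁻²`; with `ΔL = 0` and `ΔT = 2L`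
this gives `Δv = -3(m + 1) v / r²`. Since `|v|² = 1` near `x`, taking the Laplacian of `|v|²`
gives `|∇v|² = -⟨v, Δv⟩ = 3(m + 1) / r²`, and the two terms of the harmonic map equation cancel.
-/

open Topology

section Calculus

variable {m : ℕ} {f g : EuclideanSpace ℝ (Fin m) → ℝ} {x : EuclideanSpace ℝ (Fin m)}

lemma pd_congr (h : f =ᶠ[𝓝 x] g) (a : Fin m) : pd a f x = pd a g x := by
  rw [pd, pd, h.fderiv_eq]

lemma pd_const (c : ℝ) (a : Fin m) : pd a (fun _ : EuclideanSpace ℝ (Fin m) => c) x = 0 := by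
  simp [pd]

lemma pd_coord (a i : Fin m) :
    pd a (fun y : EuclideanSpace ℝ (Fin m) => y i) x = if a = i then 1 else 0 := by
  rw [pd, show (fun y : EuclideanSpace ℝ (Fin m) => y i) = EuclideanSpace.proj (𝕜 := ℝ) i
    from rfl, ContinuousLinearMap.fderiv]
  simp [eq_comm]

lemma contDiff_coord (i : Fin m) {n : WithTop ℕ∞} :
    ContDiff ℝ n (fun y : EuclideanSpace ℝ (Fin m) => y i) :=
  (EuclideanSpace.proj (𝕜 := ℝ) (ι := Fin m) i).contDiff

lemma lap_coord (i : Fin m) : lap (fun y : EuclideanSpace ℝ (Fin m) => y i) x = 0 := by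
  refine Finset.sum_eq_zero fun a _ => ?_
  rw [show pd a (fun y : EuclideanSpace ℝ (Fin m) => y i) = fun _ => if a = i then 1 else 0 from
    funext fun _ => pd_coord a i, pd_const]

lemma pd_add (hf : DifferentiableAt ℝ f x) (hg : DifferentiableAt ℝ g x) (a : Fin m) :
    pd a (fun y => f y + g y) x = pd a f x + pd a g x := by
  simp [pd, fderiv_fun_add hf hg]

lemma pd_sub (hf : DifferentiableAt ℝ f x) (hg : DifferentiableAt ℝ g x) (a : Fin m) :
    pd a (fun y => f y - g y) x = pd a f x - pd a g x := by
  simp [pd, fderiv_fun_sub hf hg]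

lemma pd_const_mul (hf : DifferentiableAt ℝ f x) (c : ℝ) (a : Fin m) :
    pd a (fun y => c * f y) x = c * pd a f x := by
  simp [pd, fderiv_const_mul hf]

lemma pd_mul (hf : DifferentiableAt ℝ f x) (hg : DifferentiableAt ℝ g x) (a : Fin m) :
    pd a (fun y => f y * g y) x = pd a f x * g x + f x * pd a g x := by
  simp only [pd, fderiv_fun_mul hf hg, add_apply, smul_apply, smul_eq_mul]
  ring

lemma pd_sum {ι : Type*} (t : Finset ι) {F : ι → EuclideanSpace ℝ (Fin m) → ℝ}
    (hF : ∀ i ∈ t, DifferentiableAt ℝ (F i) x) (a : Fin m) :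
    pd a (fun y => ∑ i ∈ t, F i y) x = ∑ i ∈ t, pd a (F i) x := by
  simp [pd, fderiv_fun_sum hF]

lemma pd_comp {φ : ℝ → ℝ} {φ' : ℝ} (hφ : HasDerivAt φ φ' (f x)) (hf : DifferentiableAt ℝ f x)
    (a : Fin m) : pd a (fun y => φ (f y)) x = φ' * pd a f x := by
  rw [pd, pd, show (fun y => φ (f y)) = φ ∘ f from rfl,
    (hφ.comp_hasFDerivAt x hf.hasFDerivAt).fderiv]
  simp

lemma pd_norm (hx : x ≠ 0) (a : Fin m) :
    pd a (fun y : EuclideanSpace ℝ (Fin m) => ‖y‖) x = x a / ‖x‖ := by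
  have hsq := pd_comp (hasDerivAt_pow 2 ‖x‖) (differentiableAt_id.norm ℝ hx) a
  rw [pd, fderiv_norm_sq_apply] at hsq
  simp only [smul_apply, coe_innerSL_apply, EuclideanSpace.inner_single_right, ringHom_apply,
    one_mul, nsmul_eq_mul, Nat.cast_ofNat, Nat.add_one_sub_one, pow_one] at hsq
  rw [eq_div_iff (norm_ne_zero_iff.2 hx)]
  linarith

lemma differentiableAt_pd (hf : ContDiffAt ℝ 2 f x) (a : Fin m) :
    DifferentiableAt ℝ (pd a f) x :=
  ((hf.fderiv_right (m := 1) le_rfl).differentiableAt one_ne_zero).clm_apply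
    (differentiableAt_const _)

lemma eventually_differentiableAt (hf : ContDiffAt ℝ 2 f x) :
    ∀ᶠ y in 𝓝 x, DifferentiableAt ℝ f y :=
  (hf.eventually (by simp)).mono fun _ hy => hy.differentiableAt two_ne_zero

lemma lap_congr (h : f =ᶠ[𝓝 x] g) : lap f x = lap g x :=
  Finset.sum_congr rfl fun a _ => pd_congr (h.eventuallyEq_nhds.mono fun _ hy => pd_congr hy a) a

lemma lap_const (c : ℝ) : lap (fun _ : EuclideanSpace ℝ (Fin m) => c) x = 0 := by
  refine Finset.sum_eq_zero fun a _ => ?_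
  rw [show pd a (fun _ : EuclideanSpace ℝ (Fin m) => c) = fun _ => 0 from
    funext fun _ => pd_const c a, pd_const]

lemma lap_add (hf : ContDiffAt ℝ 2 f x) (hg : ContDiffAt ℝ 2 g x) :
    lap (fun y => f y + g y) x = lap f x + lap g x := by
  rw [lap, lap, lap, ← Finset.sum_add_distrib]
  refine Finset.sum_congr rfl fun a _ => ?_
  have h : pd a (fun y => f y + g y) =ᶠ[𝓝 x] fun y => pd a f y + pd a g y := by
    filter_upwards [eventually_differentiableAt hf, eventually_differentiableAt hg]
      with y hfy hgy using pd_add hfy hgy a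
  rw [pd_congr h, pd_add (differentiableAt_pd hf a) (differentiableAt_pd hg a)]

lemma lap_sub (hf : ContDiffAt ℝ 2 f x) (hg : ContDiffAt ℝ 2 g x) :
    lap (fun y => f y - g y) x = lap f x - lap g x := by
  rw [lap, lap, lap, ← Finset.sum_sub_distrib]
  refine Finset.sum_congr rfl fun a _ => ?_
  have h : pd a (fun y => f y - g y) =ᶠ[𝓝 x] fun y => pd a f y - pd a g y := by
    filter_upwards [eventually_differentiableAt hf, eventually_differentiableAt hg]
      with y hfy hgy using pd_sub hfy hgy a
  rw [pd_congr h, pd_sub (differentiableAt_pd hf a) (differentiableAt_pd hg a)]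

lemma lap_const_mul (hf : ContDiffAt ℝ 2 f x) (c : ℝ) :
    lap (fun y => c * f y) x = c * lap f x := by
  rw [lap, lap, Finset.mul_sum]
  refine Finset.sum_congr rfl fun a _ => ?_
  have h : pd a (fun y => c * f y) =ᶠ[𝓝 x] fun y => c * pd a f y := by
    filter_upwards [eventually_differentiableAt hf] with y hfy using pd_const_mul hfy c a
  rw [pd_congr h, pd_const_mul (differentiableAt_pd hf a)]

lemma lap_mul (hf : ContDiffAt ℝ 2 f x) (hg : ContDiffAt ℝ 2 g x) :
    lap (fun y => f y * g y) x
      = lap f x * g x + 2 * ∑ a, pd a f x * pd a g x + f x * lap g x := by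
  rw [lap, lap, lap, Finset.sum_mul, Finset.mul_sum, Finset.mul_sum, ← Finset.sum_add_distrib,
    ← Finset.sum_add_distrib]
  refine Finset.sum_congr rfl fun a _ => ?_
  have h : pd a (fun y => f y * g y) =ᶠ[𝓝 x] fun y => pd a f y * g y + f y * pd a g y := by
    filter_upwards [eventually_differentiableAt hf, eventually_differentiableAt hg]
      with y hfy hgy using pd_mul hfy hgy a
  have hf' := hf.differentiableAt two_ne_zero
  have hg' := hg.differentiableAt two_ne_zero
  have hfa := differentiableAt_pd hf a
  have hga := differentiableAt_pd hg a
  rw [pd_congr h, pd_add (hfa.fun_mul hg') (hf'.fun_mul hga), pd_mul hfa hg', pd_mul hf' hga]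
  ring

lemma lap_sum {ι : Type*} (t : Finset ι) {F : ι → EuclideanSpace ℝ (Fin m) → ℝ}
    (hF : ∀ i ∈ t, ContDiffAt ℝ 2 (F i) x) :
    lap (fun y => ∑ i ∈ t, F i y) x = ∑ i ∈ t, lap (F i) x := by
  simp only [lap]
  rw [Finset.sum_comm]
  refine Finset.sum_congr rfl fun a _ => ?_
  have h : pd a (fun y => ∑ i ∈ t, F i y) =ᶠ[𝓝 x] fun y => ∑ i ∈ t, pd a (F i) y := by
    filter_upwards [(Filter.eventually_all_finset t).2 fun i hi =>
      eventually_differentiableAt (hF i hi)] with y hy using pd_sum t hy a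
  rw [pd_congr h, pd_sum t fun i hi => differentiableAt_pd (hF i hi) a]

lemma sum_coord_mul_self (x : EuclideanSpace ℝ (Fin m)) : ∑ a, x a * x a = ‖x‖ ^ 2 := by
  rw [EuclideanSpace.real_norm_sq_eq]
  simp only [sq]

lemma sum_coord_mul_pd_of_homogeneous (hf : DifferentiableAt ℝ f x) (ℓ : ℕ)
    (hhom : ∀ t : ℝ, f (t • x) = t ^ ℓ * f x) : ∑ a, x a * pd a f x = ℓ * f x := by
  have hsum : ∑ a, x a * pd a f x = fderiv ℝ f x x := calc
    _ = fderiv ℝ f x (∑ a, x a • EuclideanSpace.single a 1) := by simp [pd]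
    _ = fderiv ℝ f x x := by
      congr 1
      simpa using (EuclideanSpace.basisFun (Fin m) ℝ).sum_repr x
  have hray : HasDerivAt (fun t : ℝ => f (t • x)) (fderiv ℝ f x x) 1 := by
    have hline : HasDerivAt (fun t : ℝ => t • x) x 1 := by
      simpa using (hasDerivAt_id (1 : ℝ)).smul_const x
    exact hf.hasFDerivAt.comp_hasDerivAt_of_eq 1 hline (one_smul ℝ x).symm
  have hpow : HasDerivAt (fun t : ℝ => f (t • x)) (ℓ * f x) 1 := by
    simp_rw [hhom]
    simpa using (hasDerivAt_pow ℓ (1 : ℝ)).mul_const (f x)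
  rw [hsum, hray.unique hpow]

lemma contDiffAt_norm_rpow (hx : x ≠ 0) (s : ℝ) {n : WithTop ℕ∞} :
    ContDiffAt ℝ n (fun y : EuclideanSpace ℝ (Fin m) => ‖y‖ ^ s) x :=
  (contDiffAt_norm ℝ hx).rpow_const_of_ne (norm_ne_zero_iff.2 hx)

lemma pd_norm_rpow (hx : x ≠ 0) (s : ℝ) (a : Fin m) :
    pd a (fun y : EuclideanSpace ℝ (Fin m) => ‖y‖ ^ s) x = s * x a * ‖x‖ ^ (s - 2) := by
  have hr : ‖x‖ ≠ 0 := norm_ne_zero_iff.2 hx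
  rw [pd_comp (f := fun y => ‖y‖) (Real.hasDerivAt_rpow_const (Or.inl hr))
    (differentiableAt_id.norm ℝ hx), pd_norm hx,
    show s - 1 = s - 2 + 1 by ring, Real.rpow_add_one hr]
  field_simp

lemma lap_norm_rpow (hx : x ≠ 0) (s : ℝ) :
    lap (fun y : EuclideanSpace ℝ (Fin m) => ‖y‖ ^ s) x = s * (s + m - 2) * ‖x‖ ^ (s - 2) := by
  have hdiff : DifferentiableAt ℝ (fun y : EuclideanSpace ℝ (Fin m) => ‖y‖ ^ (s - 2)) x :=
    (contDiffAt_norm_rpow hx (s - 2) (n := 1)).differentiableAt one_ne_zero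
  have hterm : ∀ a, pd a (pd a fun y : EuclideanSpace ℝ (Fin m) => ‖y‖ ^ s) x
      = s * ‖x‖ ^ (s - 2) + s * (s - 2) * (x a * x a) * ‖x‖ ^ (s - 4) := by
    intro a
    have h : pd a (fun y : EuclideanSpace ℝ (Fin m) => ‖y‖ ^ s) =ᶠ[𝓝 x]
        fun y => s * (y a * ‖y‖ ^ (s - 2)) := by
      filter_upwards [eventually_ne_nhds hx] with y hy
      rw [pd_norm_rpow hy]
      ring
    have hcoord := (contDiff_coord a (n := 1)).contDiffAt.differentiableAt one_ne_zero (x := x)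
    rw [pd_congr h, pd_const_mul (hcoord.fun_mul hdiff), pd_mul hcoord hdiff, pd_coord,
      if_pos rfl, pd_norm_rpow hx]
    ring_nf
  have hsq : ‖x‖ ^ 2 * ‖x‖ ^ (s - 4) = ‖x‖ ^ (s - 2) := by
    rw [← Real.rpow_natCast, ← Real.rpow_add (norm_pos_iff.2 hx)]
    ring_nf
  simp only [lap, hterm, Finset.sum_add_distrib, ← Finset.mul_sum, ← Finset.sum_mul,
    sum_coord_mul_self, Finset.sum_const, Finset.card_univ, Fintype.card_fin, nsmul_eq_mul]
  rw [mul_assoc _ (‖x‖ ^ 2), hsq]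
  ring

lemma lap_mul_norm_rpow (hf : ContDiffAt ℝ 2 f x) (hx : x ≠ 0) (s ℓ : ℝ)
    (heuler : ∑ a, x a * pd a f x = ℓ * f x) :
    lap (fun y => f y * ‖y‖ ^ s) x
      = lap f x * ‖x‖ ^ s + s * (2 * ℓ + s + m - 2) * f x * ‖x‖ ^ (s - 2) := by
  have hcross : ∑ a, pd a f x * pd a (fun y : EuclideanSpace ℝ (Fin m) => ‖y‖ ^ s) x
      = s * ‖x‖ ^ (s - 2) * (ℓ * f x) := by
    rw [← heuler, Finset.mul_sum]
    exact Finset.sum_congr rfl fun a _ => by rw [pd_norm_rpow hx]; ring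
  rw [lap_mul hf (contDiffAt_norm_rpow hx s), lap_norm_rpow hx, hcross]
  ring

lemma gradSq_eq_neg_sum_mul_lap {ι : Type*} [Fintype ι] {w : ι → EuclideanSpace ℝ (Fin m) → ℝ}
    (hw : ∀ i, ContDiffAt ℝ 2 (w i) x) (hsphere : ∀ᶠ y in 𝓝 x, ∑ i, w i y ^ 2 = 1) :
    gradSq w x = -∑ i, w i x * lap (w i) x := by
  have h0 : lap (fun y => ∑ i, w i y * w i y) x = 0 := by
    rw [lap_congr (g := fun _ => 1) (hsphere.mono fun y hy => by simpa [sq] using hy), lap_const]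
  rw [lap_sum _ fun i _ => (hw i).mul (hw i)] at h0
  simp only [lap_mul (hw _) (hw _), Finset.sum_add_distrib, ← Finset.mul_sum] at h0
  rw [gradSq, Finset.sum_comm]
  simp only [sq, mul_comm (lap _ x)] at h0 ⊢
  linarith

end Calculus

namespace MisawaNakauchi

variable {m : ℕ} {x : EuclideanSpace ℝ (Fin m)}

def linearPart (i j k : Fin m) (y : EuclideanSpace ℝ (Fin m)) : ℝ :=
  (if i = j then 1 else 0) * y k + (if j = k then 1 else 0) * y i
    + (if i = k then 1 else 0) * y j

def cubicPart (i j k : Fin m) (y : EuclideanSpace ℝ (Fin m)) : ℝ := y i * y j * y k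

lemma linearPart_smul (i j k : Fin m) (t : ℝ) (y : EuclideanSpace ℝ (Fin m)) :
    linearPart i j k (t • y) = t ^ 1 * linearPart i j k y := by
  simp only [linearPart, PiLp.smul_apply, smul_eq_mul]
  ring

lemma cubicPart_smul (i j k : Fin m) (t : ℝ) (y : EuclideanSpace ℝ (Fin m)) :
    cubicPart i j k (t • y) = t ^ 3 * cubicPart i j k y := by
  simp only [cubicPart, PiLp.smul_apply, smul_eq_mul]
  ring

lemma contDiff_linearPart (i j k : Fin m) {n : WithTop ℕ∞} :
    ContDiff ℝ n (linearPart i j k) := by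
  unfold linearPart
  fun_prop

lemma contDiff_cubicPart (i j k : Fin m) {n : WithTop ℕ∞} : ContDiff ℝ n (cubicPart i j k) := by
  unfold cubicPart
  fun_prop

lemma lap_linearPart (i j k : Fin m) : lap (linearPart i j k) x = 0 := by
  have hc : ∀ (a : Fin m) (c : ℝ),
      ContDiffAt ℝ 2 (fun y : EuclideanSpace ℝ (Fin m) => c * y a) x :=
    fun a c => contDiffAt_const.mul (contDiff_coord a).contDiffAt
  show lap (fun y => _ + _ + _) x = 0
  rw [lap_add ((hc k _).add (hc i _)) (hc j _), lap_add (hc k _) (hc i _),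
    lap_const_mul (contDiff_coord k).contDiffAt, lap_const_mul (contDiff_coord i).contDiffAt,
    lap_const_mul (contDiff_coord j).contDiffAt, lap_coord, lap_coord, lap_coord]
  ring

lemma lap_cubicPart (i j k : Fin m) : lap (cubicPart i j k) x = 2 * linearPart i j k x := by
  have hc : ∀ a : Fin m, ContDiffAt ℝ 2 (fun y : EuclideanSpace ℝ (Fin m) => y a) x :=
    fun a => (contDiff_coord a).contDiffAt
  have hd : ∀ a : Fin m, DifferentiableAt ℝ (fun y : EuclideanSpace ℝ (Fin m) => y a) x :=
    fun a => (hc a).differentiableAt two_ne_zero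
  show lap (fun y => y i * y j * y k) x = _
  rw [lap_mul ((hc i).mul (hc j)) (hc k), lap_mul (hc i) (hc j)]
  simp only [pd_mul (hd i) (hd j), pd_coord, lap_coord, linearPart]
  simp only [zero_mul, mul_ite, mul_one, mul_zero, Finset.sum_ite_eq', Finset.mem_univ,
    if_true, zero_add, add_zero, ite_mul, one_mul, eq_comm (a := j) (b := i),
    eq_comm (a := k) (b := i), eq_comm (a := k) (b := j)]
  split_ifs <;> ring

lemma sum_linearPart_sq (x : EuclideanSpace ℝ (Fin m)) :
    ∑ i, ∑ j, ∑ k, linearPart i j k x ^ 2 = 3 * (m + 2) * ‖x‖ ^ 2 := by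
  simp only [linearPart, sq, add_mul, mul_add, Finset.sum_add_distrib]
  simp only [ite_mul, one_mul, zero_mul, ← sq, ite_pow, ne_eq, OfNat.ofNat_ne_zero,
    not_false_eq_true, zero_pow, Finset.sum_ite_irrel, ← EuclideanSpace.real_norm_sq_eq,
    Finset.sum_const_zero, Finset.sum_ite_eq, Finset.mem_univ, if_true, Finset.sum_const,
    Finset.card_univ, Fintype.card_fin, nsmul_eq_mul, mul_ite, mul_zero, ← Finset.mul_sum,
    Finset.sum_ite_eq']
  ring

lemma sum_linearPart_mul_cubicPart (x : EuclideanSpace ℝ (Fin m)) :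
    ∑ i, ∑ j, ∑ k, linearPart i j k x * cubicPart i j k x = 3 * ‖x‖ ^ 4 := by
  simp only [linearPart, cubicPart, add_mul, Finset.sum_add_distrib, ite_mul, one_mul, zero_mul,
    Finset.sum_ite_irrel, Finset.sum_const_zero, Finset.sum_ite_eq, Finset.mem_univ, if_true]
  ring_nf
  simp only [← Finset.mul_sum, ← Finset.sum_mul, ← EuclideanSpace.real_norm_sq_eq]
  ring

lemma sum_cubicPart_sq (x : EuclideanSpace ℝ (Fin m)) :
    ∑ i, ∑ j, ∑ k, cubicPart i j k x ^ 2 = ‖x‖ ^ 6 := by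
  simp only [cubicPart, mul_pow, ← Finset.mul_sum, ← Finset.sum_mul,
    ← EuclideanSpace.real_norm_sq_eq]
  ring

lemma vMN_eq_rpow (i j k : Fin m) :
    vMN m i j k = fun y => 1 / √(((m : ℝ) - 1) * ((m : ℝ) + 2)) *
      (linearPart i j k y * ‖y‖ ^ (-1 : ℝ) - (m + 2) * (cubicPart i j k y * ‖y‖ ^ (-3 : ℝ))) := by
  funext y
  simp only [vMN, linearPart, cubicPart, Real.rpow_neg (norm_nonneg y), Real.rpow_one,
    Real.rpow_ofNat]
  ring

lemma contDiffAt_vMN (hx : x ≠ 0) (i j k : Fin m) : ContDiffAt ℝ 2 (vMN m i j k) x := by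
  rw [vMN_eq_rpow]
  exact contDiffAt_const.mul
    ((((contDiff_linearPart i j k).contDiffAt).mul (contDiffAt_norm_rpow hx _)).sub
      (contDiffAt_const.mul (((contDiff_cubicPart i j k).contDiffAt).mul
        (contDiffAt_norm_rpow hx _))))

lemma lap_vMN (hx : x ≠ 0) (i j k : Fin m) :
    lap (vMN m i j k) x = -(3 * (m + 1) / ‖x‖ ^ 2) * vMN m i j k x := by
  have hL := (contDiff_linearPart i j k (n := 2)).contDiffAt (x := x)
  have hT := (contDiff_cubicPart i j k (n := 2)).contDiffAt (x := x)
  have hF := hL.mul (contDiffAt_norm_rpow hx (-1))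
  have hG : ContDiffAt ℝ 2 (fun y => ((m : ℝ) + 2) * (cubicPart i j k y * ‖y‖ ^ (-3 : ℝ))) x :=
    contDiffAt_const.mul (hT.mul (contDiffAt_norm_rpow hx (-3)))
  have eL := lap_mul_norm_rpow hL hx (-1) _ (sum_coord_mul_pd_of_homogeneous
    (hL.differentiableAt two_ne_zero) 1 (linearPart_smul i j k · x))
  have eT := lap_mul_norm_rpow hT hx (-3) _ (sum_coord_mul_pd_of_homogeneous
    (hT.differentiableAt two_ne_zero) 3 (cubicPart_smul i j k · x))
  rw [vMN_eq_rpow, lap_const_mul (hF.sub hG), lap_sub hF hG,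
    lap_const_mul (hT.mul (contDiffAt_norm_rpow hx (-3))), eL, eT, lap_linearPart, lap_cubicPart,
    show (-1 : ℝ) - 2 = -3 by norm_num, show (-3 : ℝ) - 2 = -5 by norm_num]
  have hr := norm_pos_iff.2 hx
  simp only [Nat.cast_one, Nat.cast_ofNat, Real.rpow_neg hr.le, Real.rpow_one, Real.rpow_ofNat]
  field_simp
  ring

lemma sum_vMN_sq (hm : 2 ≤ m) (hx : x ≠ 0) : ∑ i, ∑ j, ∑ k, vMN m i j k x ^ 2 = 1 := by
  have hr : ‖x‖ ≠ 0 := norm_ne_zero_iff.2 hx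
  have hm' : (2 : ℝ) ≤ m := by exact_mod_cast hm
  have hm1 : (m : ℝ) - 1 ≠ 0 := by linarith
  have hm2 : (m : ℝ) + 2 ≠ 0 := by linarith
  have hpos : 0 < ((m : ℝ) - 1) * (m + 2) := by nlinarith
  have hpt : ∀ i j k, vMN m i j k x ^ 2 = (linearPart i j k x ^ 2 * ‖x‖ ^ 4
      - 2 * (m + 2) * (linearPart i j k x * cubicPart i j k x) * ‖x‖ ^ 2
      + (m + 2) ^ 2 * cubicPart i j k x ^ 2) / ((((m : ℝ) - 1) * (m + 2)) * ‖x‖ ^ 6) := by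
    intro i j k
    rw [vMN_eq_rpow]
    simp only [Real.rpow_neg (norm_nonneg x), Real.rpow_one, Real.rpow_ofNat]
    field_simp
    rw [Real.sq_sqrt hpos.le]
    ring
  simp only [hpt, ← Finset.sum_div, Finset.sum_add_distrib, Finset.sum_sub_distrib,
    ← Finset.mul_sum, ← Finset.sum_mul, sum_linearPart_sq, sum_linearPart_mul_cubicPart,
    sum_cubicPart_sq]
  field_simp
  ring

lemma sum_pd_vMN_sq (hm : 2 ≤ m) (hx : x ≠ 0) :
    ∑ a : Fin m, ∑ p : Fin m, ∑ q : Fin m, ∑ s : Fin m, (pd a (vMN m p q s) x) ^ 2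
      = 3 * (m + 1) / ‖x‖ ^ 2 := by
  let w : Fin m × Fin m × Fin m → EuclideanSpace ℝ (Fin m) → ℝ :=
    fun t => vMN m t.1 t.2.1 t.2.2
  have hsphere : ∀ᶠ y in 𝓝 x, ∑ t, w t y ^ 2 = 1 := by
    filter_upwards [eventually_ne_nhds hx] with y hy
    simpa [w, Fintype.sum_prod_type] using sum_vMN_sq hm hy
  calc _ = gradSq w x := by simp only [gradSq, w, Fintype.sum_prod_type]
    _ = 3 * (m + 1) / ‖x‖ ^ 2 * ∑ t, w t x ^ 2 := by
      rw [gradSq_eq_neg_sum_mul_lap (fun t => contDiffAt_vMN hx _ _ _) hsphere, Finset.mul_sum,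
        ← Finset.sum_neg_distrib]
      exact Finset.sum_congr rfl fun t _ => by rw [lap_vMN hx]; ring
    _ = 3 * (m + 1) / ‖x‖ ^ 2 := by rw [hsphere.self_of_nhds, mul_one]

end MisawaNakauchi

open MisawaNakauchi in
theorem stmt15 (m : ℕ) (hm : 2 ≤ m) (x : EuclideanSpace ℝ (Fin m)) (hx : x ≠ 0)
    (i j k : Fin m) :
    lap (vMN m i j k) x
      + (∑ a : Fin m, ∑ p : Fin m, ∑ q : Fin m, ∑ s : Fin m,
          (pd a (vMN m p q s) x) ^ 2) * vMN m i j k x = 0 := by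
  rw [lap_vMN hx, sum_pd_vMN_sq hm hx]
  ring
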